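/- (Vanishing of the F_X-component on nonzero generalized eigenspaces, assertion (c) in the proof of Theorem 1.) Let U ⊆ ℂ² be open containing 0, X a holomorphic vector field on U, and x̃ a first integral of X, i.e. a holomorphic function with X(x̃) = 0 on U and dx̃(0) ≠ (0,0). Let β be a closed holomorphic 1-form on U with β ∧ dx̃ = 0 identically, and suppose that for some λ ∈ ℂ with λ ≠ 0 and some integer σ ≥ 1 one has β^{(σ)} = 0 near 0, where β^{(0)} := β and β^{(m+1)} := L_X β^{(m)} − λ·β^{(m)}. Then β = 0 on a neighborhood of 0. -/

import Mathlib

open Complex Filter Topology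

noncomputable section

/-- A point of the complex plane `ℂ²`. -/
abbrev Pt : Type := ℂ × ℂ

/-- A (holomorphic) 1-form `A dx + B dy` on (an open subset of) `ℂ²`,
identified with the pair of functions `(A, B)`. -/
abbrev Form1 : Type := (Pt → ℂ) × (Pt → ℂ)

/-- The complex partial derivative `∂f/∂x`. -/
noncomputable def pdx (f : Pt → ℂ) (p : Pt) : ℂ := fderiv ℂ f p (1, 0)

/-- The complex partial derivative `∂f/∂y`. -/
noncomputable def pdy (f : Pt → ℂ) (p : Pt) : ℂ := fderiv ℂ f p (0, 1)

/-- The derivative `X(f) = P ∂f/∂x + Q ∂f/∂y` of `f` along the vector field `X = (P, Q)`. -/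
noncomputable def Xf (P Q f : Pt → ℂ) (p : Pt) : ℂ := P p * pdx f p + Q p * pdy f p

/-- The contraction `i_X ω = A·P + B·Q` of the 1-form `ω = (A,B)` with `X = (P,Q)`. -/
noncomputable def contr (P Q : Pt → ℂ) (ω : Form1) (p : Pt) : ℂ := ω.1 p * P p + ω.2 p * Q p

/-- The wedge `ω ∧ ω' = A·B' − B·A'` of two 1-forms, as a function. -/
noncomputable def wedge (ω ω' : Form1) (p : Pt) : ℂ := ω.1 p * ω'.2 p - ω.2 p * ω'.1 p

/-- The differential `df = (∂f/∂x, ∂f/∂y)` of a function. -/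
noncomputable def fd (f : Pt → ℂ) : Form1 := (pdx f, pdy f)

/-- A 1-form `(A,B)` is closed on `U` if `∂A/∂y = ∂B/∂x` on `U`. -/
def IsClosedOn (ω : Form1) (U : Set Pt) : Prop := ∀ p ∈ U, pdy ω.1 p = pdx ω.2 p

/-- The Lie derivative `L_X ω` of the 1-form `ω = (A,B)` with respect to `X = (P,Q)`:
`L_X ω = (X(A) + A ∂P/∂x + B ∂Q/∂x, X(B) + A ∂P/∂y + B ∂Q/∂y)`. -/
noncomputable def lie (P Q : Pt → ℂ) (ω : Form1) : Form1 :=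
  (fun p => Xf P Q ω.1 p + ω.1 p * pdx P p + ω.2 p * pdx Q p,
   fun p => Xf P Q ω.2 p + ω.1 p * pdy P p + ω.2 p * pdy Q p)

/-- A 1-form is holomorphic on `U` if both its components are. -/
def AnalyticForm (ω : Form1) (U : Set Pt) : Prop :=
  AnalyticOnNhd ℂ ω.1 U ∧ AnalyticOnNhd ℂ ω.2 U

/-! Where `dx̃ ≠ 0` the condition `β ∧ dx̃ = 0` makes `β` proportional to `dx̃`, so `i_X β = 0`
because `X(x̃) = 0`. For closed `β`, Cartan's formula gives `L_X β = d(i_X β) = 0` there, so `β`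
is an eigenform of `L_X − λ` with eigenvalue `−λ`. Since `L_X` is local and `ℂ`-linear, the
iterates satisfy `(L_X − λ)^σ β = (−λ)^σ β` on that open set, and `λ ≠ 0` forces `β = 0`. -/

open Set

section PartialDerivatives

variable {f g : Pt → ℂ} {p : Pt}

lemma pdx_const_smul (c : ℂ) (f : Pt → ℂ) : pdx (c • f) = c • pdx f := by
  ext p; simp [pdx, fderiv_const_smul_field]

lemma pdy_const_smul (c : ℂ) (f : Pt → ℂ) : pdy (c • f) = c • pdy f := by
  ext p; simp [pdy, fderiv_const_smul_field]

lemma pdx_congr (h : f =ᶠ[𝓝 p] g) : pdx f p = pdx g p := by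
  rw [pdx, pdx, h.fderiv_eq]

lemma pdy_congr (h : f =ᶠ[𝓝 p] g) : pdy f p = pdy g p := by
  rw [pdy, pdy, h.fderiv_eq]

lemma pdx_add (hf : DifferentiableAt ℂ f p) (hg : DifferentiableAt ℂ g p) :
    pdx (f + g) p = pdx f p + pdx g p := by
  simp [pdx, fderiv_add hf hg]

lemma pdy_add (hf : DifferentiableAt ℂ f p) (hg : DifferentiableAt ℂ g p) :
    pdy (f + g) p = pdy f p + pdy g p := by
  simp [pdy, fderiv_add hf hg]

lemma pdx_mul (hf : DifferentiableAt ℂ f p) (hg : DifferentiableAt ℂ g p) :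
    pdx (f * g) p = f p * pdx g p + g p * pdx f p := by
  simp [pdx, fderiv_mul hf hg]

lemma pdy_mul (hf : DifferentiableAt ℂ f p) (hg : DifferentiableAt ℂ g p) :
    pdy (f * g) p = f p * pdy g p + g p * pdy f p := by
  simp [pdy, fderiv_mul hf hg]

lemma pdx_eq_zero_of_eqOn_zero {W : Set Pt} (hW : IsOpen W) (hf : EqOn f 0 W) (hp : p ∈ W) :
    pdx f p = 0 := by
  rw [pdx_congr (hf.eventuallyEq_of_mem (hW.mem_nhds hp))]; simp [pdx]

lemma pdy_eq_zero_of_eqOn_zero {W : Set Pt} (hW : IsOpen W) (hf : EqOn f 0 W) (hp : p ∈ W) :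
    pdy f p = 0 := by
  rw [pdy_congr (hf.eventuallyEq_of_mem (hW.mem_nhds hp))]; simp [pdy]

lemma isOpen_setOf_fd_ne_zero {U : Set Pt} (hU : IsOpen U) (hf : AnalyticOnNhd ℂ f U) :
    IsOpen {p ∈ U | (pdx f p, pdy f p) ≠ (0, 0)} := by
  have hf' : ContinuousOn (fderiv ℂ f) U := hf.fderiv.continuousOn
  exact ((hf'.clm_apply continuousOn_const).prodMk (hf'.clm_apply continuousOn_const))
    |>.isOpen_inter_preimage hU isOpen_compl_singleton

end PartialDerivatives

def FormEqOn (η ξ : Form1) (W : Set Pt) : Prop := EqOn η.1 ξ.1 W ∧ EqOn η.2 ξ.2 W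

section FormEqOn

variable {η ξ ζ : Form1} {W : Set Pt}

lemma FormEqOn.refl (η : Form1) (W : Set Pt) : FormEqOn η η W :=
  ⟨eqOn_refl _ _, eqOn_refl _ _⟩

lemma FormEqOn.trans (h : FormEqOn η ξ W) (h' : FormEqOn ξ ζ W) : FormEqOn η ζ W :=
  ⟨h.1.trans h'.1, h.2.trans h'.2⟩

lemma FormEqOn.smul (c : ℂ) (h : FormEqOn η ξ W) : FormEqOn (c • η) (c • ξ) W :=
  ⟨fun _ hp => by simp [h.1 hp], fun _ hp => by simp [h.2 hp]⟩

end FormEqOn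

section Contraction

variable {P Q f : Pt → ℂ} {β : Form1} {p : Pt} {W : Set Pt}

lemma contr_eq_zero_of_wedge_fd_eq_zero (hw : wedge β (fd f) p = 0) (hX : Xf P Q f p = 0)
    (hdf : (pdx f p, pdy f p) ≠ (0, 0)) : contr P Q β p = 0 := by
  simp only [wedge, fd, Xf] at hw hX
  have hx : contr P Q β p * pdx f p = 0 := by
    simp only [contr]; linear_combination β.1 p * hX - Q p * hw
  have hy : contr P Q β p * pdy f p = 0 := by
    simp only [contr]; linear_combination β.2 p * hX + P p * hw
  by_contra hc
  exact hdf (by simp [(mul_eq_zero.mp hx).resolve_left hc, (mul_eq_zero.mp hy).resolve_left hc])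

/-- Cartan's formula `L_X β = d(i_X β) + i_X dβ` for a closed form `β`. -/
lemma lie_eq_fd_contr (hβ₁ : DifferentiableAt ℂ β.1 p) (hβ₂ : DifferentiableAt ℂ β.2 p)
    (hP : DifferentiableAt ℂ P p) (hQ : DifferentiableAt ℂ Q p) (hcl : pdy β.1 p = pdx β.2 p) :
    (lie P Q β).1 p = pdx (contr P Q β) p ∧ (lie P Q β).2 p = pdy (contr P Q β) p := by
  change _ = pdx (β.1 * P + β.2 * Q) p ∧ _ = pdy (β.1 * P + β.2 * Q) p
  rw [pdx_add (hβ₁.mul hP) (hβ₂.mul hQ), pdx_mul hβ₁ hP, pdx_mul hβ₂ hQ,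
    pdy_add (hβ₁.mul hP) (hβ₂.mul hQ), pdy_mul hβ₁ hP, pdy_mul hβ₂ hQ]
  simp only [lie, Xf]
  constructor
  · linear_combination Q p * hcl
  · linear_combination -P p * hcl

lemma lie_eqOn_zero_of_contr_eqOn_zero (hW : IsOpen W) (hβ₁ : DifferentiableOn ℂ β.1 W)
    (hβ₂ : DifferentiableOn ℂ β.2 W) (hP : DifferentiableOn ℂ P W) (hQ : DifferentiableOn ℂ Q W)
    (hcl : IsClosedOn β W) (hcontr : EqOn (contr P Q β) 0 W) : FormEqOn (lie P Q β) 0 W := by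
  have hcartan (p : Pt) (hp : p ∈ W) :=
    lie_eq_fd_contr (hβ₁.differentiableAt (hW.mem_nhds hp)) (hβ₂.differentiableAt (hW.mem_nhds hp))
      (hP.differentiableAt (hW.mem_nhds hp)) (hQ.differentiableAt (hW.mem_nhds hp)) (hcl p hp)
  exact ⟨fun p hp => by simp [(hcartan p hp).1, pdx_eq_zero_of_eqOn_zero hW hcontr hp],
    fun p hp => by simp [(hcartan p hp).2, pdy_eq_zero_of_eqOn_zero hW hcontr hp]⟩

end Contraction

def shiftedLie (P Q : Pt → ℂ) (l : ℂ) (η : Form1) : Form1 := lie P Q η - l • η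

section ShiftedLie

variable {P Q : Pt → ℂ} {l : ℂ} {β η ξ : Form1} {W : Set Pt}

lemma FormEqOn.lie (hW : IsOpen W) (h : FormEqOn η ξ W) :
    FormEqOn (lie P Q η) (lie P Q ξ) W := by
  refine ⟨fun p hp => ?_, fun p hp => ?_⟩ <;>
  · have h₁ := h.1.eventuallyEq_of_mem (hW.mem_nhds hp)
    have h₂ := h.2.eventuallyEq_of_mem (hW.mem_nhds hp)
    simp only [_root_.lie, Xf, pdx_congr h₁, pdy_congr h₁, pdx_congr h₂, pdy_congr h₂,
      h.1 hp, h.2 hp]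

lemma FormEqOn.shiftedLie (hW : IsOpen W) (h : FormEqOn η ξ W) :
    FormEqOn (shiftedLie P Q l η) (shiftedLie P Q l ξ) W := by
  have hlie := h.lie (P := P) (Q := Q) hW
  exact ⟨fun p hp => by simp [_root_.shiftedLie, hlie.1 hp, h.1 hp],
    fun p hp => by simp [_root_.shiftedLie, hlie.2 hp, h.2 hp]⟩

lemma lie_const_smul (c : ℂ) (η : Form1) : lie P Q (c • η) = c • lie P Q η := by
  ext p <;> simp [lie, Xf, pdx_const_smul, pdy_const_smul] <;> ring

lemma shiftedLie_smul (c : ℂ) (η : Form1) :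
    shiftedLie P Q l (c • η) = c • shiftedLie P Q l η := by
  rw [shiftedLie, shiftedLie, lie_const_smul, smul_sub, smul_comm c l]

lemma iterate_shiftedLie_eqOn (hW : IsOpen W) (hlie : FormEqOn (lie P Q β) 0 W) (n : ℕ) :
    FormEqOn ((shiftedLie P Q l)^[n] β) ((-l) ^ n • β) W := by
  have hβ : FormEqOn (shiftedLie P Q l β) (-l • β) W :=
    ⟨fun p hp => by simp [shiftedLie, hlie.1 hp], fun p hp => by simp [shiftedLie, hlie.2 hp]⟩
  induction n with
  | zero =>
    rw [Function.iterate_zero_apply, pow_zero, one_smul]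
    exact FormEqOn.refl β W
  | succ n ih =>
    rw [Function.iterate_succ_apply', pow_succ, mul_smul]
    exact (ih.shiftedLie hW).trans (by rw [shiftedLie_smul]; exact hβ.smul _)

end ShiftedLie

theorem stmt_15_general (U : Set Pt) (hUopen : IsOpen U) (h0U : (0 : Pt) ∈ U) (P Q xt : Pt → ℂ)
    (hP : AnalyticOnNhd ℂ P U) (hQ : AnalyticOnNhd ℂ Q U) (hxt : AnalyticOnNhd ℂ xt U)
    (hXxt : ∀ p ∈ U, Xf P Q xt p = 0) (hdxt0 : (pdx xt 0, pdy xt 0) ≠ (0, 0))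
    (β : Form1) (hβ : AnalyticForm β U) (hclosed : IsClosedOn β U)
    (hwedge : ∀ p ∈ U, wedge β (fd xt) p = 0)
    (l : ℂ) (hl : l ≠ 0) (σ : ℕ)
    (T : Form1 → Form1)
    (hT : T = fun η : Form1 => (fun p => (lie P Q η).1 p - l * η.1 p,
                                fun p => (lie P Q η).2 p - l * η.2 p))
    (hnil : ∃ V ∈ 𝓝 (0 : Pt), ∀ p ∈ V, (T^[σ] β).1 p = 0 ∧ (T^[σ] β).2 p = 0) :
    ∃ V ∈ 𝓝 (0 : Pt), ∀ p ∈ V, β.1 p = 0 ∧ β.2 p = 0 := by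
  obtain ⟨V, hV, hTσβ⟩ := hnil
  set W := {p ∈ U | (pdx xt p, pdy xt p) ≠ (0, 0)}
  have hW : IsOpen W := isOpen_setOf_fd_ne_zero hUopen hxt
  have hWU : W ⊆ U := fun _ hp => hp.1
  have hcontr : EqOn (contr P Q β) 0 W := fun p hp =>
    contr_eq_zero_of_wedge_fd_eq_zero (hwedge p hp.1) (hXxt p hp.1) hp.2
  have hlie : FormEqOn (lie P Q β) 0 W :=
    lie_eqOn_zero_of_contr_eqOn_zero hW (hβ.1.differentiableOn.mono hWU)
      (hβ.2.differentiableOn.mono hWU) (hP.differentiableOn.mono hWU)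
      (hQ.differentiableOn.mono hWU) (fun p hp => hclosed p hp.1) hcontr
  have hσβ : FormEqOn (T^[σ] β) ((-l) ^ σ • β) W := by
    rw [show T = shiftedLie P Q l from hT]
    exact iterate_shiftedLie_eqOn hW hlie σ
  have hc : (-l) ^ σ ≠ 0 := pow_ne_zero _ (neg_ne_zero.mpr hl)
  refine ⟨W ∩ V, inter_mem (hW.mem_nhds ⟨h0U, hdxt0⟩) hV, fun p ⟨hpW, hpV⟩ => ?_⟩
  have h₁ := (hσβ.1 hpW).symm.trans (hTσβ p hpV).1
  have h₂ := (hσβ.2 hpW).symm.trans (hTσβ p hpV).2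
  simp only [Prod.smul_fst, Prod.smul_snd, Pi.smul_apply, smul_eq_mul] at h₁ h₂
  exact ⟨(mul_eq_zero.mp h₁).resolve_left hc, (mul_eq_zero.mp h₂).resolve_left hc⟩

/-- **assertion (c) in the proof of Theorem 1.** Let `x̃` be a first
integral of `X = (P,Q)` on an open `U ∋ 0` (`X(x̃) = 0`, `dx̃(0) ≠ (0,0)`), and `β` a
closed holomorphic 1-form on `U` with `β ∧ dx̃ = 0`. If `(L_X − λ)^σ β = 0` near `0` for
some `λ ≠ 0` and `σ ≥ 1`, then `β = 0` near `0`. -/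
theorem stmt_15 (U : Set Pt) (hUopen : IsOpen U) (h0U : (0 : Pt) ∈ U) (P Q xt : Pt → ℂ)
    (hP : AnalyticOnNhd ℂ P U) (hQ : AnalyticOnNhd ℂ Q U) (hxt : AnalyticOnNhd ℂ xt U)
    (hXxt : ∀ p ∈ U, Xf P Q xt p = 0) (hdxt0 : (pdx xt 0, pdy xt 0) ≠ (0, 0))
    (β : Form1) (hβ : AnalyticForm β U) (hclosed : IsClosedOn β U)
    (hwedge : ∀ p ∈ U, wedge β (fd xt) p = 0)
    (l : ℂ) (hl : l ≠ 0) (σ : ℕ) (hσ : 1 ≤ σ)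
    (T : Form1 → Form1)
    (hT : T = fun η : Form1 => (fun p => (lie P Q η).1 p - l * η.1 p,
                                fun p => (lie P Q η).2 p - l * η.2 p))
    (hnil : ∃ V ∈ 𝓝 (0 : Pt), ∀ p ∈ V, (T^[σ] β).1 p = 0 ∧ (T^[σ] β).2 p = 0) :
    ∃ V ∈ 𝓝 (0 : Pt), ∀ p ∈ V, β.1 p = 0 ∧ β.2 p = 0 :=
  stmt_15_general U hUopen h0U P Q xt hP hQ hxt hXxt hdxt0 β hβ hclosed hwedge l hl σ T hT hnil
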